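/- Let S be a numerical semigroup. For all elements s₁, s₂ ∈ S, one has ord_S(s₁+s₂) ≤ ord_S(s₁) + ord_S(s₂) + min{ l_{s₁}(S), l_{s₂}(S) }. -/

import Mathlib

open scoped Pointwise

/-- `S ⊆ ℕ` is a numerical semigroup: it contains `0`, is closed under
addition, and has finite complement in `ℕ`. -/
def IsNumSgp (S : Set ℕ) : Prop :=
  (0 : ℕ) ∈ S ∧ (∀ a ∈ S, ∀ b ∈ S, a + b ∈ S) ∧ {x : ℕ | x ∉ S}.Finite

/-- `nM S t` is the `t`-fold sumset of the maximal ideal `M = S \ {0}`,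
with the convention `nM S 0 = S`. -/
def nM (S : Set ℕ) : ℕ → Set ℕ
  | 0 => S
  | t + 1 => (S \ {0}) + nM S t

/-- the order of `s` with respect to `S` : the largest `t` with `s ∈ tM`. -/
noncomputable def ordS (S : Set ℕ) (s : ℕ) : ℕ := sSup {t : ℕ | s ∈ nM S t}

/-- the multiplicity of `S` : its least nonzero element. -/
noncomputable def mult (S : Set ℕ) : ℕ := sInf {x : ℕ | x ∈ S ∧ x ≠ 0}

/-- the Apéry set of `S` with respect to `x` : elements `s ∈ S` with `s - x ∉ S`. -/
def Ap (S : Set ℕ) (x : ℕ) : Set ℕ := {s : ℕ | s ∈ S ∧ ¬ ∃ t ∈ S, s = t + x}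

/-- membership of an integer in (the image in `ℤ` of) `S`. -/
def zmem (S : Set ℕ) (z : ℤ) : Prop := ∃ t ∈ S, (t : ℤ) = z

/-- the Frobenius number of `S` : the largest integer not in `S`. -/
noncomputable def Frob (S : Set ℕ) : ℤ := sSup {z : ℤ | ¬ zmem S z}

/-- `S` is symmetric: for every integer `z`, `z ∈ S` iff `F(S) - z ∉ S`. -/
def IsSymmetric (S : Set ℕ) : Prop := ∀ z : ℤ, zmem S z ↔ ¬ zmem S (Frob S - z)

/-- the set of maximal elements of `Ap S x` with respect to the order
`u ⪯ v` iff `v = u + z` for some `z ∈ S`. -/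
def MaxAp (S : Set ℕ) (x : ℕ) : Set ℕ :=
  {w : ℕ | w ∈ Ap S x ∧ ∀ y ∈ Ap S x, (∃ z ∈ S, y = w + z) → y = w}

/-- the set of maximal elements of `Ap S x` with respect to the order
`u ⪯_M v` iff `v = u + z` for some `z ∈ S` with `ord(v) = ord(u) + ord(z)`. -/
def MaxMAp (S : Set ℕ) (x : ℕ) : Set ℕ :=
  {w : ℕ | w ∈ Ap S x ∧ ∀ y ∈ Ap S x,
    (∃ z ∈ S, y = w + z ∧ ordS S y = ordS S w + ordS S z) → y = w}

/-- `S` is M-pure with respect to `x` : all maximal elements of `Ap S x`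
under `⪯_M` have the same order. -/
def MPureWrt (S : Set ℕ) (x : ℕ) : Prop :=
  ∀ w ∈ MaxMAp S x, ∀ w' ∈ MaxMAp S x, ordS S w = ordS S w'

/-- `S` is M-pure : it is M-pure with respect to its multiplicity. -/
def MPure (S : Set ℕ) : Prop := MPureWrt S (mult S)

/-- `β_i(x)` : the number of elements of `Ap S x` of order `i`. -/
noncomputable def betaS (S : Set ℕ) (x i : ℕ) : ℕ := {w ∈ Ap S x | ordS S w = i}.ncard

/-- `d(x)` : the maximal order of an element of `Ap S x`. -/
noncomputable def dS (S : Set ℕ) (x : ℕ) : ℕ := sSup (ordS S '' Ap S x)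

/-- the reduction number of `S` : the least `r` with `(r+1)M = m(S) + rM`. -/
noncomputable def redNum (S : Set ℕ) : ℕ :=
  sInf {r : ℕ | nM S (r + 1) = (fun y => mult S + y) '' nM S r}

/-- `l_x(S) = max { ord(s+x) - ord(x) - ord(s) : s ∈ S, ord(s) ≤ r }`. -/
noncomputable def lS (S : Set ℕ) (x : ℕ) : ℕ :=
  sSup {t : ℕ | ∃ s ∈ S, ordS S s ≤ redNum S ∧ t = ordS S (s + x) - ordS S x - ordS S s}

/-- the Hilbert function of `S`. -/
noncomputable def HilbS (S : Set ℕ) (t : ℕ) : ℕ := (nM S t \ nM S (t + 1)).ncard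

/-- The data of a gluing `S = ⟨q m₁, …, q m_d, p n₁, …, p n_k⟩` of two numerical
semigroups `S₁ = ⟨m₁, …, m_d⟩` and `S₂ = ⟨n₁, …, n_k⟩`, minimally generated by
`m₁ < ⋯ < m_d` and `n₁ < ⋯ < n_k`, where `p ∈ S₁ \ {m₁, …, m_d}`,
`q ∈ S₂ \ {n₁, …, n_k}` and `gcd(p, q) = 1`. -/
structure Gluing where
  d : ℕ
  k : ℕ
  hd : 0 < d
  hk : 0 < k
  m : Fin d → ℕ
  n : Fin k → ℕ
  p : ℕ
  q : ℕ
  hm : StrictMono m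
  hn : StrictMono n
  hmin₁ : ∀ i, m i ∉ AddSubmonoid.closure (Set.range m \ {m i})
  hmin₂ : ∀ j, n j ∉ AddSubmonoid.closure (Set.range n \ {n j})
  hnum₁ : IsNumSgp (AddSubmonoid.closure (Set.range m) : Set ℕ)
  hnum₂ : IsNumSgp (AddSubmonoid.closure (Set.range n) : Set ℕ)
  hp : p ∈ AddSubmonoid.closure (Set.range m)
  hq : q ∈ AddSubmonoid.closure (Set.range n)
  hpm : p ∉ Set.range m
  hqn : q ∉ Set.range n
  hpq : Nat.gcd p q = 1

/-- the numerical semigroup `S₁ = ⟨m₁, …, m_d⟩`. -/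
def Gluing.S₁ (G : Gluing) : Set ℕ := (AddSubmonoid.closure (Set.range G.m) : Set ℕ)

/-- the numerical semigroup `S₂ = ⟨n₁, …, n_k⟩`. -/
def Gluing.S₂ (G : Gluing) : Set ℕ := (AddSubmonoid.closure (Set.range G.n) : Set ℕ)

/-- the glued numerical semigroup `S = ⟨q m₁, …, q m_d, p n₁, …, p n_k⟩`. -/
def Gluing.S (G : Gluing) : Set ℕ :=
  (AddSubmonoid.closure
    ((fun x => G.q * x) '' Set.range G.m ∪ (fun x => G.p * x) '' Set.range G.n) : Set ℕ)

/-- the smallest generator `m₁` of `S₁`. -/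
def Gluing.m₁ (G : Gluing) : ℕ := G.m ⟨0, G.hd⟩

/-- the smallest generator `n₁` of `S₂`. -/
def Gluing.n₁ (G : Gluing) : ℕ := G.n ⟨0, G.hk⟩

/-- the gluing is specific if `ord_{S₂}(q) + l_q(S₂) ≤ ord_{S₁}(p)`. -/
def Gluing.Specific (G : Gluing) : Prop := ordS G.S₂ G.q + lS G.S₂ G.q ≤ ordS G.S₁ G.p

/-- the gluing is nice if `q = a n₁` for some `1 < a ≤ ord_{S₁}(p)`. -/
def Gluing.Nice (G : Gluing) : Prop := ∃ a : ℕ, 1 < a ∧ a ≤ ordS G.S₁ G.p ∧ G.q = a * G.n₁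

/-!
Beyond the reduction number `r` the filtration is shifted by the multiplicity `e`:
`(k+1)M = e + kM` for every `k ≥ r`, so adding `e` to an element of order at least
`r` raises its order by exactly one. Hence an element `s` with `ord s > r` is `e + s'` with
`ord s' = ord s - 1`, and `ord (s + x) = ord (s' + x) + 1`. Descending in this way to an element
of order at most `r`, where the bound is the definition of `l_x`, gives
`ord (s + x) ≤ ord s + ord x + l_x` for all `s, x ∈ S`; symmetry in `s₁, s₂` gives the minimum.
-/

variable {S : Set ℕ}

lemma le_of_mem_nM {x : ℕ} : ∀ {t : ℕ}, x ∈ nM S t → t ≤ x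
  | 0, _ => Nat.zero_le x
  | t + 1, hx => by
      obtain ⟨m, hm, y, hy, rfl⟩ := Set.mem_add.1 hx
      have := le_of_mem_nM hy
      have : m ≠ 0 := hm.2
      omega

lemma bddAbove_setOf_mem_nM (s : ℕ) : BddAbove {t | s ∈ nM S t} :=
  ⟨s, fun _ => le_of_mem_nM⟩

lemma le_ordS_of_mem_nM {s t : ℕ} (h : s ∈ nM S t) : t ≤ ordS S s :=
  le_csSup (bddAbove_setOf_mem_nM s) h

lemma mem_nM_ordS {s : ℕ} (hs : s ∈ S) : s ∈ nM S (ordS S s) :=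
  Nat.sSup_mem ⟨0, hs⟩ (bddAbove_setOf_mem_nM s)

lemma ordS_le_self (s : ℕ) : ordS S s ≤ s :=
  csSup_le' fun _ => le_of_mem_nM

lemma mult_le {x : ℕ} (hx : x ∈ S \ {0}) : mult S ≤ x :=
  Nat.sInf_le hx

lemma mem_nM_succ_cases : ∀ {t x : ℕ}, x ∈ nM S (t + 1) →
    x ∈ (mult S + ·) '' nM S t ∨ (t + 1) * (mult S + 1) ≤ x
  | t, _, hx => by
    obtain ⟨m, hm, y, hy, rfl⟩ := Set.mem_add.1 hx
    obtain rfl | hlt := (mult_le hm).eq_or_lt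
    · exact .inl ⟨y, hy, rfl⟩
    cases t with
    | zero => right; omega
    | succ t =>
      rcases mem_nM_succ_cases hy with ⟨z, hz, rfl⟩ | hy
      · exact .inl ⟨m + z, ⟨m, hm, z, hz, rfl⟩, add_left_comm _ _ _⟩
      · right; nlinarith

namespace IsNumSgp

lemma nM_subset (hS : IsNumSgp S) : ∀ t, nM S t ⊆ S
  | 0 => subset_rfl
  | t + 1 => by
      rintro _ ⟨m, hm, y, hy, rfl⟩
      exact hS.2.1 m hm.1 y (hS.nM_subset t hy)

lemma add_mem_nM (hS : IsNumSgp S) {s : ℕ} (hs : s ∈ S) :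
    ∀ {t x : ℕ}, x ∈ nM S t → x + s ∈ nM S t
  | 0, x, hx => hS.2.1 x hx s hs
  | _ + 1, _, ⟨m, hm, y, hy, rfl⟩ => ⟨m, hm, y + s, hS.add_mem_nM hs hy, (add_assoc m y s).symm⟩

lemma ordS_le_ordS_add (hS : IsNumSgp S) {s x : ℕ} (hs : s ∈ S) (hx : x ∈ S) :
    ordS S s ≤ ordS S (s + x) :=
  le_ordS_of_mem_nM (hS.add_mem_nM hx (mem_nM_ordS hs))

lemma exists_conductor (hS : IsNumSgp S) : ∃ c, ∀ x, c ≤ x → x ∈ S := by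
  obtain ⟨c, hc⟩ := hS.2.2.bddAbove
  refine ⟨c + 1, fun x hx => by_contra fun hxS => ?_⟩
  have : x ≤ c := hc hxS
  omega

lemma mult_mem (hS : IsNumSgp S) : mult S ∈ S \ {0} := by
  obtain ⟨c, hc⟩ := hS.exists_conductor
  exact Nat.sInf_mem ⟨c + 1, hc _ (by omega), Nat.succ_ne_zero c⟩

lemma mult_add_mem_nM_succ (hS : IsNumSgp S) {t y : ℕ} (hy : y ∈ nM S t) :
    mult S + y ∈ nM S (t + 1) :=
  ⟨mult S, hS.mult_mem, y, hy, rfl⟩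

lemma mul_mult_mem_nM (hS : IsNumSgp S) : ∀ t, t * mult S ∈ nM S t
  | 0 => by rw [zero_mul]; exact hS.1
  | t + 1 => by
      rw [add_one_mul, add_comm (t * mult S)]
      exact hS.mult_add_mem_nM_succ (hS.mul_mult_mem_nM t)

lemma mem_nM_of_le (hS : IsNumSgp S) {c : ℕ} (hc : ∀ x, c ≤ x → x ∈ S) {t s : ℕ}
    (h : c + t * mult S ≤ s) : s ∈ nM S t := by
  have := hS.add_mem_nM (hc (s - t * mult S) (by omega)) (hS.mul_mult_mem_nM t)
  rwa [Nat.add_sub_cancel' (by omega)] at this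

/-- The conductor `c` shows that the set defining `redNum` is nonempty: an element of `(c+1)M`
outside `e + cM` is at least `(c+1)(e+1)`, hence lies in `e + ce + S ⊆ e + cM`. -/
lemma nM_redNum_succ (hS : IsNumSgp S) :
    nM S (redNum S + 1) = (mult S + ·) '' nM S (redNum S) := by
  obtain ⟨c, hc⟩ := hS.exists_conductor
  refine Nat.sInf_mem (s := {r | nM S (r + 1) = (mult S + ·) '' nM S r}) ⟨c, ?_⟩
  refine subset_antisymm (fun x hx => ?_) fun _ ⟨y, hy, hxy⟩ => hxy ▸ hS.mult_add_mem_nM_succ hy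
  rcases mem_nM_succ_cases hx with hx | hbig
  · exact hx
  have : c * mult S + c + mult S + 1 ≤ x := by linarith
  exact ⟨x - mult S, hS.mem_nM_of_le hc (by omega), Nat.add_sub_cancel' (by omega)⟩

lemma nM_succ_subset_image (hS : IsNumSgp S) {k : ℕ} (hk : redNum S ≤ k) :
    nM S (k + 1) ⊆ (mult S + ·) '' nM S k := by
  induction k, hk using Nat.le_induction with
  | base => exact hS.nM_redNum_succ.subset
  | succ k _ ih =>
    rintro _ ⟨m, hm, _, hy, rfl⟩
    obtain ⟨z, hz, rfl⟩ := ih hy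
    exact ⟨m + z, ⟨m, hm, z, hz, rfl⟩, add_left_comm _ _ _⟩

lemma ordS_mult_add (hS : IsNumSgp S) {w : ℕ} (hw : w ∈ S) (hr : redNum S ≤ ordS S w) :
    ordS S (mult S + w) = ordS S w + 1 := by
  have hew := hS.mult_add_mem_nM_succ (mem_nM_ordS hw)
  have hlow := le_ordS_of_mem_nM hew
  obtain ⟨k, hk⟩ : ∃ k, ordS S (mult S + w) = k + 1 := Nat.exists_eq_add_one.2 (by omega)
  have hmem := mem_nM_ordS (hS.nM_subset _ hew)
  rw [hk] at hmem
  obtain ⟨y, hy, hyw⟩ := hS.nM_succ_subset_image (by omega) hmem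
  obtain rfl : y = w := Nat.add_left_cancel hyw
  have := le_ordS_of_mem_nM hy
  omega

lemma exists_eq_mult_add_of_redNum_lt (hS : IsNumSgp S) {s : ℕ} (hs : s ∈ S)
    (hr : redNum S < ordS S s) :
    ∃ s' ∈ S, s = mult S + s' ∧ ordS S s' + 1 = ordS S s := by
  obtain ⟨k, hk⟩ : ∃ k, ordS S s = k + 1 := Nat.exists_eq_add_one.2 (by omega)
  have hmem := mem_nM_ordS hs
  rw [hk] at hmem
  obtain ⟨s', hs', rfl⟩ := hS.nM_succ_subset_image (by omega) hmem
  have := le_ordS_of_mem_nM hs'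
  refine ⟨s', hS.nM_subset k hs', rfl, ?_⟩
  rw [hS.ordS_mult_add (hS.nM_subset k hs') (by omega)]

lemma bddAbove_lS (hS : IsNumSgp S) (x : ℕ) :
    BddAbove {t : ℕ | ∃ s ∈ S, ordS S s ≤ redNum S ∧ t = ordS S (s + x) - ordS S x - ordS S s} := by
  obtain ⟨c, hc⟩ := hS.exists_conductor
  refine ⟨c + (redNum S + 1) * mult S + x, ?_⟩
  rintro _ ⟨s, -, hsr, rfl⟩
  have hs : s < c + (redNum S + 1) * mult S := by
    by_contra! h
    have := le_ordS_of_mem_nM (hS.mem_nM_of_le hc h)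
    omega
  have := ordS_le_self (S := S) (s + x)
  omega

lemma ordS_add_le_of_ordS_le_redNum (hS : IsNumSgp S) {s : ℕ} (hs : s ∈ S)
    (hsr : ordS S s ≤ redNum S) (x : ℕ) : ordS S (s + x) ≤ ordS S s + ordS S x + lS S x := by
  have : ordS S (s + x) - ordS S x - ordS S s ≤ lS S x :=
    le_csSup (hS.bddAbove_lS x) ⟨s, hs, hsr, rfl⟩
  omega

theorem ordS_add_le (hS : IsNumSgp S) {s x : ℕ} (hs : s ∈ S) (hx : x ∈ S) :
    ordS S (s + x) ≤ ordS S s + ordS S x + lS S x := by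
  induction h : ordS S s generalizing s with
  | zero => exact h ▸ hS.ordS_add_le_of_ordS_le_redNum hs (h ▸ Nat.zero_le _) x
  | succ n ih =>
    rcases le_or_gt (ordS S s) (redNum S) with hr | hr
    · exact h ▸ hS.ordS_add_le_of_ordS_le_redNum hs hr x
    obtain ⟨s', hs', rfl, hord⟩ := hS.exists_eq_mult_add_of_redNum_lt hs hr
    have hs'x := hS.ordS_le_ordS_add hs' hx
    rw [add_assoc, hS.ordS_mult_add (hS.2.1 _ hs' _ hx) (by omega)]
    have := ih hs' (by omega)
    omega

end IsNumSgp

/-- `ord_S(s₁+s₂) ≤ ord_S(s₁) + ord_S(s₂) + min(l_{s₁}(S), l_{s₂}(S))`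
for all `s₁, s₂ ∈ S`. -/
theorem stmt3 (S : Set ℕ) (hS : IsNumSgp S) :
    ∀ s₁ ∈ S, ∀ s₂ ∈ S,
      ordS S (s₁ + s₂) ≤ ordS S s₁ + ordS S s₂ + min (lS S s₁) (lS S s₂) := by
  intro s₁ h₁ s₂ h₂
  have h₁₂ := hS.ordS_add_le h₁ h₂
  have h₂₁ := hS.ordS_add_le h₂ h₁
  rw [add_comm s₂] at h₂₁
  omega
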